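/- Let Σ be a signature and T₁ ≤ T₂ in the Σ-easterly wind order. If i is an internal node of both T₁ and T₂ admitting the same parent in T₁ and T₂, then lb(T₂)(i) ≤ lb(T₁)(i), where lb(T)(i) is the number of internal-node siblings of i lying weakly to its left (including i itself). -/

import Mathlib

structure Signature where
  carrier : Type
  arity : carrier → ℕ

namespace EW

variable {σ : Signature}

/-- Σ-terms: planar rooted trees with nodes decorated by the signature. -/
inductive PreTerm (σ : Signature) where
  | leaf : PreTerm σ
  | node : σ.carrier → List (PreTerm σ) → PreTerm σ

/-- Well-formedness: each internal node decorated by `s` has `arity s` children. -/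
def WF : PreTerm σ → Prop
  | .leaf => True
  | .node s l => l.length = σ.arity s ∧ ∀ t ∈ l, WF t

def isLeaf : PreTerm σ → Bool
  | .leaf => true
  | .node _ _ => false

/-- Subterm at an address (list of 0-based child positions). -/
def subAt : PreTerm σ → List ℕ → Option (PreTerm σ)
  | t, [] => some t
  | .leaf, _ :: _ => none
  | .node _ l, j :: p =>
      match l[j]? with
      | some t => subAt t p
      | none => none
  termination_by t p => p.length

/-- Replace the subterm at an address. -/
def replaceAt : PreTerm σ → List ℕ → PreTerm σ → PreTerm σ
  | _, [], R => R
  | .leaf, _ :: _, _ => .leaf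
  | .node s l, j :: p, R => .node s (l.set j (replaceAt (l.getD j .leaf) p R))
  termination_by t p _ => p.length

/-- Addresses of all positions (internal nodes and leaves) in preorder. -/
def addrs : PreTerm σ → List (List ℕ)
  | .leaf => [[]]
  | .node _ l =>
      [] :: (((l.attach.map (fun t => addrs t.1)).zipIdx.map Prod.swap).map
        (fun jp => jp.2.map (jp.1 :: ·))).flatten
  decreasing_by
    have := List.sizeOf_lt_of_mem t.2
    simp only [PreTerm.node.sizeOf_spec]
    omega

def isNodeAt (T : PreTerm σ) (p : List ℕ) : Bool :=
  match subAt T p with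
  | some (.node _ _) => true
  | _ => false

/-- Addresses of internal nodes, in preorder. -/
def nodeAddrs (T : PreTerm σ) : List (List ℕ) := (addrs T).filter (isNodeAt T)

/-- Degree: number of internal nodes. -/
def deg (T : PreTerm σ) : ℕ := (nodeAddrs T).length

/-- Address of the `i`-th internal node (1-indexed, preorder). -/
def nodeAddr (T : PreTerm σ) (i : ℕ) : Option (List ℕ) := (nodeAddrs T)[i-1]?

/-- Preorder index (1-based) of the internal node at address `p`. -/
def nodeIdx (T : PreTerm σ) (p : List ℕ) : ℕ := (nodeAddrs T).idxOf p + 1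

/-- Parent of internal node `i` (the root is its own parent). -/
def paOf (T : PreTerm σ) (i : ℕ) : ℕ :=
  match nodeAddr T i with
  | some [] => 1
  | some p => nodeIdx T p.dropLast
  | none => 0

/-- Local position of internal node `i` among its parent's children
(1-based; the root has local position 0). -/
def lpOf (T : PreTerm σ) (i : ℕ) : ℕ :=
  match nodeAddr T i with
  | some [] => 0
  | some p => p.getLast?.getD 0 + 1
  | none => 0

def decAt (T : PreTerm σ) (p : List ℕ) : Option σ.carrier :=
  match subAt T p with
  | some (.node s _) => some s
  | _ => none

/-- The decoration word: decorations of internal nodes in preorder. -/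
def dcWord (T : PreTerm σ) : List σ.carrier := (nodeAddrs T).filterMap (decAt T)

def arityOfNode (T : PreTerm σ) (i : ℕ) : ℕ :=
  match nodeAddr T i with
  | some p =>
      match decAt T p with
      | some s => σ.arity s
      | none => 0
  | none => 0

/-- The connection word entry:
`cnc T i = pa T i + 1 - 2 ^ (lp T i - arity (decoration of pa T i))`. -/
def cnc (T : PreTerm σ) (i : ℕ) : ℚ :=
  (paOf T i : ℚ) + 1 - (2 : ℚ) ^ ((lpOf T i : ℤ) - (arityOfNode T (paOf T i) : ℤ))

def cncWord (T : PreTerm σ) : List ℚ := (List.range (deg T)).map (fun k => cnc T (k+1))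

/-- The Σ-easterly wind order. -/
def ewLE (T₁ T₂ : PreTerm σ) : Prop :=
  dcWord T₁ = dcWord T₂ ∧ ∀ i, 1 ≤ i → i ≤ deg T₁ → cnc T₁ i ≤ cnc T₂ i

/-- The easterly wind rewrite rule `T₁ ⇀_i T₂` : the internal node `i` of `T₁`
is visited immediately after a leaf in preorder, and `T₂` is obtained by moving
the subterm rooted at `i` onto that leaf. -/
def Rewrite (i : ℕ) (T₁ T₂ : PreTerm σ) : Prop :=
  ∃ p q k S,
    nodeAddr T₁ i = some p ∧
    (addrs T₁)[k]? = some q ∧ (addrs T₁)[k+1]? = some p ∧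
    subAt T₁ q = some .leaf ∧
    subAt T₁ p = some S ∧
    T₂ = replaceAt (replaceAt T₁ p .leaf) q S

def RewriteAny (T₁ T₂ : PreTerm σ) : Prop := ∃ i, 1 ≤ i ∧ Rewrite i T₁ T₂

/-- `(i₁, j₁, i)` is dominated by `(i₂, j₂, i)` iff `(i₁, -j₁) ≤lex (i₂, -j₂)`:
here on the pairs of (parent, local position). -/
def Dominated (e₁ e₂ : ℕ × ℕ) : Prop := e₁.1 < e₂.1 ∨ (e₁.1 = e₂.1 ∧ e₂.2 ≤ e₁.2)

/-- `i''` is a (strict) descendant of `i'`. -/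
def Desc (T : PreTerm σ) (i' i'' : ℕ) : Prop :=
  ∃ p q, nodeAddr T i' = some p ∧ nodeAddr T i'' = some q ∧ p <+: q ∧ p ≠ q

end EW
namespace EW

variable {σ : Signature}

def sortNodesFirst (l : List (PreTerm σ)) : List (PreTerm σ) :=
  l.filter (fun t => !isLeaf t) ++ l.filter (fun t => isLeaf t)

def sortLeavesFirst (l : List (PreTerm σ)) : List (PreTerm σ) :=
  l.filter (fun t => isLeaf t) ++ l.filter (fun t => !isLeaf t)

mutual
/-- Tilting map: at every internal node whose preorder index (the second
argument is the index of the current root) belongs to `X`, rearrange the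
children so that the non-leaf children, keeping their relative order, come
before the leaf children. -/
def tltT (X : ℕ → Prop) [DecidablePred X] : PreTerm σ → ℕ → PreTerm σ
  | .leaf, _ => .leaf
  | .node s l, n =>
      .node s (if X n then sortNodesFirst (tltL X l (n+1)) else tltL X l (n+1))
def tltL (X : ℕ → Prop) [DecidablePred X] : List (PreTerm σ) → ℕ → List (PreTerm σ)
  | [], _ => []
  | t :: ts, n => tltT X t n :: tltL X ts (n + deg t)
end

mutual
/-- Reversed tilting map: leaf children first. -/
def tltRT (X : ℕ → Prop) [DecidablePred X] : PreTerm σ → ℕ → PreTerm σ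
  | .leaf, _ => .leaf
  | .node s l, n =>
      .node s (if X n then sortLeavesFirst (tltRL X l (n+1)) else tltRL X l (n+1))
def tltRL (X : ℕ → Prop) [DecidablePred X] : List (PreTerm σ) → ℕ → List (PreTerm σ)
  | [], _ => []
  | t :: ts, n => tltRT X t n :: tltRL X ts (n + deg t)
end

/-- The X-tilting map. -/
def tlt (X : ℕ → Prop) [DecidablePred X] (T : PreTerm σ) : PreTerm σ := tltT X T 1

/-- The X-reversed tilting map. -/
def tltR (X : ℕ → Prop) [DecidablePred X] (T : PreTerm σ) : PreTerm σ := tltRT X T 1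

/-- Fully tilted: tilted w.r.t. the set of all positive integers. -/
def FullyTilted (T : PreTerm σ) : Prop := tlt (fun n => 1 ≤ n) T = T

/-- {1}-tilted. -/
def tltOne (T : PreTerm σ) : PreTerm σ := tlt (fun n => n = 1) T

/-- Number of internal-node siblings of the node `i` lying weakly to its left
(including `i` itself). -/
def lb (T : PreTerm σ) (i : ℕ) : ℕ :=
  match nodeAddr T i with
  | some [] => 0
  | some p =>
      match subAt T p.dropLast with
      | some (.node _ l) =>
          ((l.take (p.getLast?.getD 0 + 1)).filter (fun t => !isLeaf t)).length
      | _ => 0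
  | none => 0

/-- Scope: number of (strict) internal-node descendants of the node `i`. -/
def sc (T : PreTerm σ) (i : ℕ) : ℕ :=
  match nodeAddr T i with
  | some p =>
      match subAt T p with
      | some S => deg S - 1
      | none => 0
  | none => 0

end EW
namespace EW

variable {σ : Signature}

/-- The signature Σ_ℕ := Σ ⊔ ℕ, where `n : ℕ` has arity `n`. -/
def sigN (σ : Signature) : Signature := ⟨σ.carrier ⊕ ℕ, Sum.elim σ.arity id⟩

/-- All decorations come from Σ (no ℕ-decoration). -/
def OnlyBase : PreTerm (sigN σ) → Prop
  | .leaf => True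
  | .node (Sum.inl _) l => ∀ t ∈ l, OnlyBase t
  | .node (Sum.inr _) _ => False
  decreasing_by
    all_goals
      rename_i hmem
      have := List.sizeOf_lt_of_mem hmem
      have h2 : ∀ (c : (sigN σ).carrier) (l' : List (PreTerm (sigN σ))),
          sizeOf l' < sizeOf (PreTerm.node c l') := by
        intro c l'
        simp only [PreTerm.node.sizeOf_spec]
        omega
      exact lt_trans this (h2 _ _)

/-- The corolla on `s`: a single internal node with `arity s` leaves. -/
def corolla (s : σ.carrier) : PreTerm σ := .node s (List.replicate (σ.arity s) .leaf)

/-- Number of leaves (arity) of a term. -/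
def arT (T : PreTerm σ) : ℕ := ((addrs T).filter (fun p => !isNodeAt T p)).length

mutual
/-- Replace the leftmost leaf of the first term by the second term. -/
def graftLeft : PreTerm σ → PreTerm σ → PreTerm σ
  | .leaf, R => R
  | .node s l, R => .node s (graftLeftL l R)
def graftLeftL : List (PreTerm σ) → PreTerm σ → List (PreTerm σ)
  | [], _ => []
  | t :: ts, R => if arT t = 0 then t :: graftLeftL ts R else graftLeft t R :: ts
end

/-- `f↑(w)`: the forest of corollas `|w| · C(w 1) ⋯ C(w n)`. -/
def fUp (w : List σ.carrier) : PreTerm (sigN σ) :=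
  .node (Sum.inr w.length) (w.map (fun s => corolla (σ := sigN σ) (Sum.inl s)))

/-- `f↓(w)`: iteratively graft the corollas of the letters of `w` onto the
leftmost leaf, starting from the corolla of `|w|`. -/
def fDown (w : List σ.carrier) : PreTerm (sigN σ) :=
  w.foldl (fun F s => graftLeft F (corolla (σ := sigN σ) (Sum.inl s)))
    (corolla (σ := sigN σ) (Sum.inr w.length))

/-- Σ-forest: a Σ_ℕ-term `n · T₁ ⋯ T_n` with the `Tᵢ`'s Σ-terms. -/
def IsForest (F : PreTerm (sigN σ)) : Prop :=
  WF F ∧ ∃ n l, F = .node (Sum.inr n) l ∧ ∀ t ∈ l, OnlyBase t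

/-- Size of a balanced forest: its degree minus one. -/
def fsize (F : PreTerm (sigN σ)) : ℕ := deg F - 1

/-- Balanced Σ-forest: `deg F = n + 1` where `n` decorates the root. -/
def IsBalanced (F : PreTerm (sigN σ)) : Prop :=
  IsForest F ∧ ∃ n l, F = .node (Sum.inr n) l ∧ deg F = n + 1

/-- Leaning Σ-forest: balanced and {1}-tilted. -/
def IsLeaning (F : PreTerm (sigN σ)) : Prop := IsBalanced F ∧ tltOne F = F

/-- Concatenation of forests. -/
def fconc : PreTerm (sigN σ) → PreTerm (sigN σ) → PreTerm (sigN σ)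
  | .node (Sum.inr n) l, .node (Sum.inr n') l' => .node (Sum.inr (n + n')) (l ++ l')
  | F, _ => F

/-- The over operation on leaning forests. -/
def overF (F₁ F₂ : PreTerm (sigN σ)) : PreTerm (sigN σ) := tltOne (fconc F₁ F₂)

/-- Number of extreme leaves: leaves visited after every internal node. -/
def extremeCount (T : PreTerm σ) : ℕ :=
  (((addrs T).map (fun p => !isNodeAt T p)).reverse.takeWhile id).length

mutual
/-- Graft the terms of the second argument (listed from the rightmost extreme
leaf to the leftmost) onto the extreme leaves of the first argument, from the
right. Returns the new term, the unused grafts and whether everything seen so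
far is still in the extreme zone. -/
def gET : PreTerm σ → List (PreTerm σ) → PreTerm σ × List (PreTerm σ) × Bool
  | .leaf, ts =>
      match ts with
      | [] => (.leaf, [], true)
      | g :: gs => (g, gs, true)
  | .node s l, ts =>
      let r := gEL l ts
      (.node s r.1, r.2.1, false)
def gEL : List (PreTerm σ) → List (PreTerm σ) → List (PreTerm σ) × List (PreTerm σ) × Bool
  | [], ts => ([], ts, true)
  | t :: us, ts =>
      let r := gEL us ts
      if r.2.2 then
        let a := gET t r.2.1
        (a.1 :: r.1, a.2.1, a.2.2)
      else (t :: r.1, r.2.1, false)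
end

def childrenOf : PreTerm (sigN σ) → List (PreTerm (sigN σ))
  | .node _ l => l
  | .leaf => []

/-- The under operation on leaning forests: graft the root subterms of
`F₂ ⌢ C(r)` onto the extreme leaves of `F₁ ⌢ C(n₂)`. -/
def under (F₁ F₂ : PreTerm (sigN σ)) : PreTerm (sigN σ) :=
  (gET (fconc F₁ (corolla (σ := sigN σ) (Sum.inr (fsize F₂))))
    (List.replicate (extremeCount F₁) PreTerm.leaf ++ (childrenOf F₂).reverse)).1

mutual
/-- Restriction machinery: keep only the internal nodes whose preorder index
satisfies `K`; kept nodes whose parent is removed float to the root. Returns,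
for a subterm, the in-place result (a leaf if the root of the subterm is
removed) together with the list of floated subtrees. -/
def restT (K : ℕ → Bool) : PreTerm (sigN σ) → ℕ → PreTerm (sigN σ) × List (PreTerm (sigN σ))
  | .leaf, _ => (.leaf, [])
  | .node s l, n =>
      let r := restL K l (n+1)
      if K n then (.node s (r.map Prod.fst), (r.map Prod.snd).flatten)
      else (.leaf, (r.map (fun a => (if isLeaf a.1 then [] else [a.1]) ++ a.2)).flatten)
def restL (K : ℕ → Bool) :
    List (PreTerm (sigN σ)) → ℕ → List (PreTerm (sigN σ) × List (PreTerm (sigN σ)))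
  | [], _ => []
  | t :: ts, n => restT K t n :: restL K ts (n + deg t)
end

def sumDeg (l : List (PreTerm σ)) : ℕ := (l.map deg).sum

/-- Restriction of a leaning forest to a set `I` of indices: keep the root and
the internal nodes `{i + 1 : i ∈ I}`, together with their adjacent edges;
the root gets decoration `#I` and is padded by leaves on the right. -/
def restrict (F : PreTerm (sigN σ)) (I : Finset ℕ) : PreTerm (sigN σ) :=
  match F with
  | .node (Sum.inr _) l =>
      let r := restL (fun i => decide (i - 1 ∈ I ∧ 2 ≤ i)) l 2
      let cs := (r.map (fun a => (if isLeaf a.1 then [] else [a.1]) ++ a.2)).flatten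
      .node (Sum.inr I.card) (cs ++ List.replicate (I.card - sumDeg cs) .leaf)
  | F => F

/-- k-top restriction. -/
def topRes (k : ℕ) (F : PreTerm (sigN σ)) : PreTerm (sigN σ) := restrict F (Finset.Icc 1 k)

/-- k-bottom restriction. -/
def botRes (k : ℕ) (F : PreTerm (sigN σ)) : PreTerm (sigN σ) :=
  restrict F (Finset.Icc (k+1) (fsize F))

end EW
namespace EW

/-- The signature ℕ where `arity n = n`. -/
def natSig : Signature := ⟨ℕ, id⟩

/-- `f↑` for words on the signature ℕ. -/
def fUpN (w : List ℕ) : PreTerm natSig :=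
  .node w.length (w.map (corolla (σ := natSig)))

/-- `f↓` for words on the signature ℕ. -/
def fDownN (w : List ℕ) : PreTerm natSig :=
  w.foldl (fun F s => graftLeft F (corolla (σ := natSig) s))
    (corolla (σ := natSig) w.length)

/-- The word `dw n = (n-1, n-2, …, 0)`. -/
def dwWord (n : ℕ) : List ℕ := (List.range n).reverse

/-- The minimum `dt n := n · C(n-1) ⋯ C(0)` of the rooted tree easterly wind
poset of order `n`. -/
def dt (n : ℕ) : PreTerm natSig := fUpN (dwWord n)

/-- Rooted trees. -/
inductive RTree where
  | node : List RTree → RTree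

mutual
/-- Size (number of nodes) of a rooted tree. -/
def rsize : RTree → ℕ
  | .node l => 1 + rsizeL l
def rsizeL : List RTree → ℕ
  | [] => 0
  | t :: ts => rsize t + rsizeL ts
end

mutual
/-- Scope sequence of a rooted tree: number of descendants of each node, in
preorder. -/
def scL : RTree → List ℕ
  | .node l => rsizeL l :: scLL l
def scLL : List RTree → List ℕ
  | [] => []
  | t :: ts => scL t ++ scLL ts
end

/-- The Tamari order on rooted trees (Knuth's realization): componentwise
comparison of scope sequences. -/
def tamLE (R₁ R₂ : RTree) : Prop :=
  rsize R₁ = rsize R₂ ∧ ∀ i, (scL R₁).getD i 0 ≤ (scL R₂).getD i 0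

mutual
/-- Underlying rooted tree of a term: delete the leaves and forget the
decorations. -/
def rt {σ : Signature} : PreTerm σ → RTree
  | .leaf => .node []
  | .node _ l => .node (rtL l)
def rtL {σ : Signature} : List (PreTerm σ) → List RTree
  | [] => []
  | .leaf :: ts => rtL ts
  | .node _ l :: ts => .node (rtL l) :: rtL ts
end

end EW

namespace EW

variable {σ : Signature}

/-! ### auxiliary lemmas -/

theorem beq_inst_eq' : (List.instBEq : BEq (List ℕ)) = instBEqOfDecidableEq := by
  have h : ∀ a b : List ℕ, (@BEq.beq _ List.instBEq a b) = (@BEq.beq _ instBEqOfDecidableEq a b) := by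
    intro a b
    by_cases hab : a = b
    · subst hab; simp
    · have h1 : (@BEq.beq _ List.instBEq a b) = false := by
        rw [← Bool.not_eq_true]; intro hc; exact hab (eq_of_beq hc)
      have h2 : (@BEq.beq _ instBEqOfDecidableEq a b) = false := by
        rw [← Bool.not_eq_true]; intro hc; exact hab (eq_of_beq hc)
      rw [h1, h2]
  cases hl : (List.instBEq : BEq (List ℕ)) with
  | mk f => cases hr : (instBEqOfDecidableEq : BEq (List ℕ)) with
    | mk g =>
      congr 1
      funext a b
      have := h a b
      rw [hl, hr] at this
      exact this

theorem idxOf_inst (a : List ℕ) (l : List (List ℕ)) :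
    @List.idxOf (List ℕ) List.instBEq a l = @List.idxOf (List ℕ) instBEqOfDecidableEq a l := by
  rw [beq_inst_eq']

theorem subAt_append (p q : List ℕ) : ∀ (T : PreTerm σ),
    subAt T (p ++ q) = (subAt T p).bind (fun t => subAt t q) := by
  induction p with
  | nil => intro T; simp [subAt]
  | cons j p ih =>
    intro T
    cases T with
    | leaf => simp [subAt]
    | node s l =>
      simp only [List.cons_append, subAt]
      cases h : l[j]? with
      | none => simp
      | some t => simp [ih]

theorem addrs_node (s : σ.carrier) (l : List (PreTerm σ)) :
    addrs (.node s l) =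
      [] :: ((((l.map addrs).zipIdx 0).map Prod.swap).map (fun jp => jp.2.map (jp.1 :: ·))).flatten := by
  rw [addrs]
  congr 2
  rw [List.attach_map_val (l := l) (f := addrs)]

theorem mem_blocks {q : List ℕ} : ∀ {k : ℕ} {Ls : List (List (List ℕ))},
    (q ∈ (((Ls.zipIdx k).map Prod.swap).map (fun jp => jp.2.map (jp.1 :: ·))).flatten ↔
      ∃ j L q', Ls[j]? = some L ∧ q = (k + j) :: q' ∧ q' ∈ L) := by
  intro k Ls
  induction Ls generalizing k with
  | nil => simp
  | cons L Ls ih =>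
    simp only [List.zipIdx_cons, List.map_cons, Prod.swap_prod_mk, List.flatten_cons, List.mem_append,
      List.mem_map, ih]
    constructor
    · rintro (⟨q', hq', rfl⟩ | ⟨j, L', q', h1, rfl, h3⟩)
      · exact ⟨0, L, q', by simp, by simp, hq'⟩
      · refine ⟨j + 1, L', q', by simpa using h1, ?_, h3⟩
        congr 1
        omega
    · rintro ⟨j, L', q', h1, rfl, h3⟩
      cases j with
      | zero =>
        simp only [List.getElem?_cons_zero, Option.some.injEq] at h1
        subst h1
        exact Or.inl ⟨q', h3, by simp⟩
      | succ j =>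
        refine Or.inr ⟨j, L', q', by simpa using h1, ?_, h3⟩
        congr 1
        omega

theorem pairwise_blocks {k : ℕ} {Ls : List (List (List ℕ))}
    (h : ∀ L ∈ Ls, L.Pairwise (List.Lex (· < ·))) :
    ((((Ls.zipIdx k).map Prod.swap).map (fun jp => jp.2.map (jp.1 :: ·))).flatten).Pairwise
      (List.Lex (· < ·)) := by
  induction Ls generalizing k with
  | nil => simp
  | cons L Ls ih =>
    simp only [List.zipIdx_cons, List.map_cons, Prod.swap_prod_mk, List.flatten_cons, List.pairwise_append]
    refine ⟨?_, ih (fun L' hL' => h L' (List.mem_cons_of_mem _ hL')), ?_⟩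
    · exact List.Pairwise.map _ (fun _ _ hab => List.Lex.cons hab) (h L List.mem_cons_self)
    · intro x hx y hy
      obtain ⟨a, _, rfl⟩ := List.mem_map.1 hx
      obtain ⟨j, L', q', _, rfl, _⟩ := mem_blocks.1 hy
      exact List.Lex.rel (by omega)

theorem pairwise_addrs : ∀ (T : PreTerm σ), (addrs T).Pairwise (List.Lex (· < ·))
  | .leaf => by simp [addrs]
  | .node s l => by
      have IH : ∀ t ∈ l, (addrs t).Pairwise (List.Lex (· < ·)) := fun t _ => pairwise_addrs t
      rw [addrs_node]
      refine List.pairwise_cons.2 ⟨?_, ?_⟩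
      · intro q hq
        obtain ⟨j, L, q', _, rfl, _⟩ := mem_blocks.1 hq
        exact List.Lex.nil
      · refine pairwise_blocks (fun L hL => ?_)
        obtain ⟨t, ht, rfl⟩ := List.mem_map.1 hL
        exact IH t ht
termination_by T => sizeOf T
decreasing_by
  have := List.sizeOf_lt_of_mem ‹_ ∈ l›
  simp only [PreTerm.node.sizeOf_spec]
  omega

theorem mem_addrs_iff : ∀ (T : PreTerm σ) (q : List ℕ), q ∈ addrs T ↔ (subAt T q).isSome
  | .leaf, q => by
      cases q with
      | nil => simp [addrs, subAt]
      | cons j p => simp [addrs, subAt]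
  | .node s l, q => by
      rw [addrs_node, List.mem_cons, mem_blocks]
      cases q with
      | nil => simp [subAt]
      | cons j p =>
        have IH : ∀ t ∈ l, ∀ q', (q' ∈ addrs t ↔ (subAt t q').isSome) :=
          fun t _ q' => mem_addrs_iff t q'
        simp only [List.cons.injEq, subAt, reduceCtorEq, false_or]
        constructor
        · rintro ⟨j', L, q', h1, ⟨rfl, rfl⟩, h3⟩
          simp only [List.getElem?_map, Option.map_eq_some_iff] at h1
          obtain ⟨t, ht, rfl⟩ := h1
          rw [Nat.zero_add, ht]
          exact ((IH t (List.mem_of_getElem? ht) _).1 h3)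
        · intro h
          cases hj : l[j]? with
          | none => rw [hj] at h; simp at h
          | some t =>
            rw [hj] at h
            refine ⟨j, (addrs t), p, ?_, by simp, ?_⟩
            · simp [hj]
            · exact (IH t (List.mem_of_getElem? hj) p).2 h
termination_by T => sizeOf T
decreasing_by
  have := List.sizeOf_lt_of_mem ‹_ ∈ l›
  simp only [PreTerm.node.sizeOf_spec]
  omega

end EW
namespace EW

variable {σ : Signature}

theorem mem_nodeAddrs_iff {T : PreTerm σ} {q : List ℕ} :
    q ∈ nodeAddrs T ↔ ∃ s' l', subAt T q = some (.node s' l') := by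
  rw [nodeAddrs, List.mem_filter, mem_addrs_iff, isNodeAt]
  constructor
  · rintro ⟨h1, h2⟩
    cases h : subAt T q with
    | none => rw [h] at h1; simp at h1
    | some t =>
      cases t with
      | leaf => rw [h] at h2; simp at h2
      | node s' l' => exact ⟨s', l', rfl⟩
  · rintro ⟨s', l', h⟩
    rw [h]
    simp

theorem pairwise_nodeAddrs (T : PreTerm σ) :
    (nodeAddrs T).Pairwise (List.Lex (· < ·)) :=
  (pairwise_addrs T).filter _

theorem nodup_nodeAddrs (T : PreTerm σ) : (nodeAddrs T).Nodup :=
  (pairwise_nodeAddrs T).imp (fun {a b} h => by rintro rfl; exact asymm h h)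

theorem nodeAddrs_parent {T : PreTerm σ} {q : List ℕ} (hq : q ∈ nodeAddrs T) (hne : q ≠ []) :
    q.dropLast ∈ nodeAddrs T := by
  obtain ⟨s', l', h⟩ := mem_nodeAddrs_iff.1 hq
  have hrc : q.dropLast ++ [q.getLast hne] = q := List.dropLast_append_getLast hne
  rw [← hrc, subAt_append] at h
  cases hd : subAt T q.dropLast with
  | none => rw [hd] at h; simp at h
  | some t =>
    rw [hd, show (some t).bind (fun t => subAt t [q.getLast hne]) = subAt t [q.getLast hne] from rfl] at h
    cases t with
    | leaf => simp [subAt] at h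
    | node s'' l'' => exact mem_nodeAddrs_iff.2 ⟨s'', l'', hd⟩

theorem nodeAddrs_getElem_zero (T : PreTerm σ) (h0 : 0 < (nodeAddrs T).length) :
    (nodeAddrs T)[0] = [] := by
  cases T with
  | leaf =>
    exfalso
    have hl : nodeAddrs (σ := σ) .leaf = [] := by
      rw [nodeAddrs]
      simp [addrs, isNodeAt, subAt]
    rw [hl] at h0
    simp at h0
  | node s l =>
    have : nodeAddrs (PreTerm.node s l) =
        [] :: (((((l.map addrs).zipIdx 0).map Prod.swap).map
          (fun jp => jp.2.map (jp.1 :: ·))).flatten).filter (isNodeAt (PreTerm.node s l)) := by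
      rw [nodeAddrs, addrs_node, List.filter_cons, if_pos (by simp [isNodeAt, subAt])]
    simp [this]

/-! ### lex order helpers -/

theorem lex_append_ne {p t : List ℕ} (ht : t ≠ []) : List.Lex (· < ·) p (p ++ t) := by
  induction p with
  | nil =>
    cases t with
    | nil => exact absurd rfl ht
    | cons a t => exact List.Lex.nil
  | cons a p ih => exact List.Lex.cons ih

theorem lex_of_prefix_ne {p q : List ℕ} (h : p <+: q) (hne : p ≠ q) :
    List.Lex (· < ·) p q := by
  obtain ⟨t, rfl⟩ := h
  refine lex_append_ne (fun hc => hne ?_)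
  rw [hc, List.append_nil]

theorem prefix_of_lex_between {r : List ℕ} : ∀ {a q : List ℕ}, r <+: a →
    List.Lex (· < ·) r q → (List.Lex (· < ·) q a ∨ q = a) → r <+: q := by
  induction r with
  | nil => exact fun _ _ _ => List.nil_prefix
  | cons x r ih =>
    intro a q hra h1 h2
    obtain ⟨t, rfl⟩ := hra
    cases q with
    | nil => cases h1
    | cons y q =>
      cases h1 with
      | rel hxy =>
        exfalso
        rcases h2 with h2 | h2
        · cases h2 with
          | rel hyx => omega
          | cons _ => omega
        · rw [List.cons_append] at h2
          injection h2 with h2a h2b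
          omega
      | cons h1' =>
        have h2' : List.Lex (· < ·) q (r ++ t) ∨ q = r ++ t := by
          rcases h2 with h2 | h2
          · rw [List.cons_append] at h2
            cases h2 with
            | rel h => omega
            | cons h => exact Or.inl h
          · rw [List.cons_append] at h2
            injection h2 with _ h2b
            exact Or.inr h2b
        exact List.cons_prefix_cons.2 ⟨rfl, ih ⟨t, rfl⟩ h1' h2'⟩

theorem prefix_dropLast_of_prefix {r q : List ℕ} (h : r <+: q) (hl : r.length < q.length) :
    r <+: q.dropLast := by
  rw [List.prefix_iff_eq_take] at h ⊢
  rw [List.dropLast_eq_take, List.take_take]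
  rw [Nat.min_eq_left (by omega)]
  exact h

theorem lex_append_single {m c : ℕ} : ∀ {r : List ℕ},
    (List.Lex (· < ·) (r ++ [m]) (r ++ [c]) ↔ m < c) := by
  intro r
  induction r with
  | nil =>
    simp only [List.nil_append]
    constructor
    · intro h
      cases h with
      | rel h => exact h
      | cons h => cases h
    · exact fun h => List.Lex.rel h
  | cons y r ih =>
    rw [List.cons_append, List.cons_append, List.cons_lex_cons_iff, lt_self_iff_false, false_or,
      eq_self_iff_true, true_and]
    exact ih

end EW
namespace EW

variable {σ : Signature}

theorem indexOf_lt_length' {q : List ℕ} {S : List (List ℕ)} (h : q ∈ S) :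
    S.idxOf q < S.length := by
  exact List.idxOf_lt_length_iff.2 h

theorem getElem_indexOf' {q : List ℕ} {S : List (List ℕ)} (h : q ∈ S) :
    S[S.idxOf q]'(indexOf_lt_length' h) = q := by
  exact List.getElem_idxOf _

theorem indexOf_getElem' {S : List (List ℕ)} (hn : S.Nodup) (i : ℕ) (h : i < S.length) :
    S.idxOf S[i] = i := by
  exact hn.idxOf_getElem i h

theorem sorted_lt {T : PreTerm σ} {m n : ℕ} (hm : m < (nodeAddrs T).length)
    (hn : n < (nodeAddrs T).length) (h : m < n) :
    List.Lex (· < ·) (nodeAddrs T)[m] (nodeAddrs T)[n] :=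
  (List.pairwise_iff_getElem.1 (pairwise_nodeAddrs T)) m n hm hn h

theorem pos_lt_of_lex {T : PreTerm σ} {m n : ℕ} (hm : m < (nodeAddrs T).length)
    (hn : n < (nodeAddrs T).length)
    (h : List.Lex (· < ·) ((nodeAddrs T)[m]) ((nodeAddrs T)[n])) : m < n := by
  rcases Nat.lt_trichotomy m n with h' | h' | h'
  · exact h'
  · subst h'; exact absurd h (fun hc => asymm hc hc)
  · exact absurd (sorted_lt hn hm h') (fun hc => asymm h hc)

theorem deg_eq_length (T : PreTerm σ) : deg T = (nodeAddrs T).length := rfl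

theorem nodeAddr_some {T : PreTerm σ} {j : ℕ} (h2 : j ≤ deg T) (h1 : 1 ≤ j) :
    ∃ (h : j - 1 < (nodeAddrs T).length), nodeAddr T j = some ((nodeAddrs T)[j-1]) := by
  have h : j - 1 < (nodeAddrs T).length := by rw [← deg_eq_length]; omega
  exact ⟨h, List.getElem?_eq_getElem h⟩

theorem addr_ne_nil {T : PreTerm σ} {j : ℕ} (h2 : 2 ≤ j)
    (h : j - 1 < (nodeAddrs T).length) : (nodeAddrs T)[j-1] ≠ [] := by
  intro hc
  have h0 : 0 < (nodeAddrs T).length := by omega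
  have h0' : (nodeAddrs T)[0] = [] := nodeAddrs_getElem_zero T h0
  have := indexOf_getElem' (nodup_nodeAddrs T) (j-1) h
  rw [hc, ← h0', indexOf_getElem' (nodup_nodeAddrs T) 0 h0] at this
  omega

theorem paOf_eq {T : PreTerm σ} {j : ℕ} {a : List ℕ}
    (h : nodeAddr T j = some a) (hne : a ≠ []) :
    paOf T j = (nodeAddrs T).idxOf a.dropLast + 1 := by
  cases a with
  | nil => exact absurd rfl hne
  | cons x xs =>
    unfold paOf
    rw [h]
    rfl

theorem lpOf_eq {T : PreTerm σ} {j : ℕ} {a : List ℕ}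
    (h : nodeAddr T j = some a) (hne : a ≠ []) :
    lpOf T j = a.getLast?.getD 0 + 1 := by
  cases a with
  | nil => exact absurd rfl hne
  | cons x xs =>
    unfold lpOf
    rw [h]

theorem dropLast_lex_self {a : List ℕ} (hne : a ≠ []) :
    List.Lex (· < ·) a.dropLast a := by
  refine lex_of_prefix_ne (List.dropLast_prefix a) (fun hc => ?_)
  have h1 := List.length_dropLast (xs := a)
  rw [hc] at h1
  have h2 := List.length_pos_iff.2 hne
  omega

theorem paOf_lt_self {T : PreTerm σ} {j : ℕ} (h2 : 2 ≤ j) (hd : j ≤ deg T) :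
    paOf T j < j := by
  obtain ⟨hlt, hj⟩ := nodeAddr_some hd (by omega)
  have hne : (nodeAddrs T)[j-1] ≠ [] := addr_ne_nil h2 hlt
  rw [paOf_eq hj hne]
  have hmem : (nodeAddrs T)[j-1] ∈ nodeAddrs T := List.getElem_mem _
  have hrm : ((nodeAddrs T)[j-1]).dropLast ∈ nodeAddrs T := nodeAddrs_parent hmem hne
  have hgi := getElem_indexOf' hrm
  have : (nodeAddrs T).idxOf ((nodeAddrs T)[j-1]).dropLast < j - 1 := by
    refine pos_lt_of_lex (indexOf_lt_length' hrm) hlt ?_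
    rw [hgi]
    exact dropLast_lex_self hne
  omega

theorem paOf_ge {T : PreTerm σ} {i j : ℕ} (h2 : 2 ≤ i) (hd : i ≤ deg T)
    (hj1 : paOf T i < j) (hj2 : j ≤ i) : paOf T i ≤ paOf T j := by
  have hdj : j ≤ deg T := le_trans hj2 hd
  obtain ⟨hlt, hi⟩ := nodeAddr_some hd (by omega)
  have hne : (nodeAddrs T)[i-1] ≠ [] := addr_ne_nil h2 hlt
  rw [paOf_eq hi hne] at hj1 ⊢
  have hmem : (nodeAddrs T)[i-1] ∈ nodeAddrs T := List.getElem_mem _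
  have hrm : ((nodeAddrs T)[i-1]).dropLast ∈ nodeAddrs T := nodeAddrs_parent hmem hne
  have hgi := getElem_indexOf' hrm
  have hj2' : 2 ≤ j := by omega
  obtain ⟨hltj, hjj⟩ := nodeAddr_some hdj (by omega)
  have hnej : (nodeAddrs T)[j-1] ≠ [] := addr_ne_nil hj2' hltj
  rw [paOf_eq hjj hnej]
  have hqmem : (nodeAddrs T)[j-1] ∈ nodeAddrs T := List.getElem_mem _
  have hqd : ((nodeAddrs T)[j-1]).dropLast ∈ nodeAddrs T := nodeAddrs_parent hqmem hnej
  -- r ≺ q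
  have hrq : List.Lex (· < ·) ((nodeAddrs T)[i-1]).dropLast ((nodeAddrs T)[j-1]) := by
    have h' : (nodeAddrs T).idxOf ((nodeAddrs T)[i-1]).dropLast < j - 1 := by omega
    have := sorted_lt (indexOf_lt_length' hrm) hltj h'
    rw [hgi] at this
    exact this
  -- q ≼ a
  have hqa : List.Lex (· < ·) ((nodeAddrs T)[j-1]) ((nodeAddrs T)[i-1]) ∨
      (nodeAddrs T)[j-1] = (nodeAddrs T)[i-1] := by
    rcases Nat.lt_or_ge (j-1) (i-1) with h' | h'
    · exact Or.inl (sorted_lt hltj hlt h')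
    · right
      congr 1
      omega
  have hra : ((nodeAddrs T)[i-1]).dropLast <+: (nodeAddrs T)[i-1] := List.dropLast_prefix _
  have hpre : ((nodeAddrs T)[i-1]).dropLast <+: (nodeAddrs T)[j-1] :=
    prefix_of_lex_between hra hrq hqa
  have hrnq : ((nodeAddrs T)[i-1]).dropLast ≠ (nodeAddrs T)[j-1] :=
    fun hc => by rw [hc] at hrq; exact asymm hrq hrq
  have hlen : (((nodeAddrs T)[i-1]).dropLast).length < ((nodeAddrs T)[j-1]).length := by
    rcases Nat.lt_trichotomy (((nodeAddrs T)[i-1]).dropLast).length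
      ((nodeAddrs T)[j-1]).length with h' | h' | h'
    · exact h'
    · exact absurd (List.IsPrefix.eq_of_length hpre h') hrnq
    · have := hpre.length_le
      omega
  have hpre' : ((nodeAddrs T)[i-1]).dropLast <+: ((nodeAddrs T)[j-1]).dropLast :=
    prefix_dropLast_of_prefix hpre hlen
  have hfin : (nodeAddrs T).idxOf ((nodeAddrs T)[i-1]).dropLast ≤
      (nodeAddrs T).idxOf ((nodeAddrs T)[j-1]).dropLast := by
    rcases eq_or_ne (((nodeAddrs T)[i-1]).dropLast) (((nodeAddrs T)[j-1]).dropLast) with h' | h'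
    · rw [h']
    · have hlex := lex_of_prefix_ne hpre' h'
      have := pos_lt_of_lex (indexOf_lt_length' hrm) (indexOf_lt_length' hqd) (by
        rw [hgi, getElem_indexOf' hqd]; exact hlex)
      omega
  omega

end EW
namespace EW

variable {σ : Signature}

theorem WF_subAt : ∀ {q : List ℕ} {T t : PreTerm σ}, WF T → subAt T q = some t → WF t := by
  intro q
  induction q with
  | nil =>
    intro T t hw h
    rw [subAt] at h
    injection h with h
    rw [← h]
    exact hw
  | cons j p ih =>
    intro T t hw h
    cases T with
    | leaf => simp [subAt] at h
    | node s l =>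
      rw [subAt] at h
      cases hj : l[j]? with
      | none => rw [hj] at h; simp at h
      | some u =>
        rw [hj] at h
        have hw' : l.length = σ.arity s ∧ ∀ t ∈ l, WF t := by
          simp only [WF] at hw; exact hw
        exact ih (hw'.2 u (List.mem_of_getElem? hj)) h

theorem dropLast_append_getLastD {a : List ℕ} (h : a ≠ []) :
    a.dropLast ++ [a.getLast?.getD 0] = a := by
  rw [List.getLast?_eq_getLast h]
  exact List.dropLast_append_getLast h

theorem subAt_singleton (s' : σ.carrier) (l' : List (PreTerm σ)) (c : ℕ) :
    subAt (.node s' l') [c] = l'[c]? := by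
  cases h : l'[c]? with
  | none => simp [subAt, h]
  | some t => simp [subAt, h]

theorem lpOf_nil {T : PreTerm σ} {j : ℕ} (h : nodeAddr T j = some []) : lpOf T j = 0 := by
  unfold lpOf
  rw [h]

theorem arityOfNode_eq {T : PreTerm σ} {p' : ℕ} {r : List ℕ} {s' : σ.carrier}
    {l' : List (PreTerm σ)} (h : nodeAddr T p' = some r) (h2 : subAt T r = some (.node s' l')) :
    arityOfNode T p' = σ.arity s' := by
  have hdec : decAt T r = some s' := by unfold decAt; rw [h2]
  unfold arityOfNode
  rw [h]
  show (match decAt T r with | some s => σ.arity s | none => 0) = σ.arity s'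
  rw [hdec]

theorem nodeAddr_of_indexOf {T : PreTerm σ} {r : List ℕ} (h : r ∈ nodeAddrs T) :
    nodeAddr T ((nodeAddrs T).idxOf r + 1) = some r := by
  unfold nodeAddr
  rw [Nat.add_sub_cancel]
  rw [List.getElem?_eq_getElem (indexOf_lt_length' h)]
  rw [getElem_indexOf' h]

theorem cnc_lt_paOf_add_one (T : PreTerm σ) (j : ℕ) : cnc T j < (paOf T j : ℚ) + 1 := by
  unfold cnc
  have := zpow_pos (by norm_num : (0:ℚ) < 2) ((lpOf T j : ℤ) - (arityOfNode T (paOf T j) : ℤ))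
  linarith

theorem lpOf_le_arity {T : PreTerm σ} (hw : WF T) {j : ℕ} (h1 : 1 ≤ j) (h2 : j ≤ deg T) :
    lpOf T j ≤ arityOfNode T (paOf T j) := by
  obtain ⟨hlt, hj⟩ := nodeAddr_some h2 h1
  rcases eq_or_ne ((nodeAddrs T)[j-1]) [] with hnil | hne
  · rw [hnil] at hj
    rw [lpOf_nil hj]
    omega
  · rw [lpOf_eq hj hne, paOf_eq hj hne]
    have hmem : (nodeAddrs T)[j-1] ∈ nodeAddrs T := List.getElem_mem _
    have hrm : ((nodeAddrs T)[j-1]).dropLast ∈ nodeAddrs T := nodeAddrs_parent hmem hne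
    obtain ⟨s', l', hsub⟩ := mem_nodeAddrs_iff.1 hrm
    rw [arityOfNode_eq (nodeAddr_of_indexOf hrm) hsub]
    -- c < l'.length
    obtain ⟨sa, la, hsa⟩ := mem_nodeAddrs_iff.1 hmem
    rw [← dropLast_append_getLastD hne, subAt_append, hsub] at hsa
    rw [show (some (PreTerm.node s' l')).bind
        (fun t => subAt t [((nodeAddrs T)[j-1]).getLast?.getD 0]) =
        subAt (PreTerm.node s' l') [((nodeAddrs T)[j-1]).getLast?.getD 0] from rfl] at hsa
    rw [subAt_singleton] at hsa
    have hclt : ((nodeAddrs T)[j-1]).getLast?.getD 0 < l'.length := by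
      by_contra hc
      rw [List.getElem?_eq_none (by omega)] at hsa
      simp at hsa
    have hwf : WF (PreTerm.node s' l') := WF_subAt hw hsub
    have hwf' : l'.length = σ.arity s' ∧ ∀ t ∈ l', WF t := by
      simp only [WF] at hwf; exact hwf
    have harr : l'.length = σ.arity s' := hwf'.1
    omega

theorem paOf_le_cnc {T : PreTerm σ} (hw : WF T) {j : ℕ} (h1 : 1 ≤ j) (h2 : j ≤ deg T) :
    (paOf T j : ℚ) ≤ cnc T j := by
  unfold cnc
  have hle : (2:ℚ) ^ ((lpOf T j : ℤ) - (arityOfNode T (paOf T j) : ℤ)) ≤ 1 := by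
    refine zpow_le_one_of_nonpos₀ (by norm_num) ?_
    have := lpOf_le_arity hw h1 h2
    omega
  linarith

end EW
namespace EW

variable {σ : Signature}

theorem lb_one {T : PreTerm σ} (h : 0 < (nodeAddrs T).length) : lb T 1 = 0 := by
  have h1 : nodeAddr T 1 = some [] := by
    unfold nodeAddr
    rw [show (1:ℕ) - 1 = 0 from rfl, List.getElem?_eq_getElem h, nodeAddrs_getElem_zero T h]
  unfold lb
  rw [h1]

theorem length_filter_take (l : List (PreTerm σ)) (n : ℕ) :
    ((l.take n).filter (fun t => !isLeaf t)).length =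
      ((Finset.range n).filter (fun m => isLeaf (l.getD m .leaf) = false)).card := by
  induction n with
  | zero => simp
  | succ n ih =>
    rw [List.take_succ, List.filter_append, List.length_append, ih, Finset.range_add_one,
      Finset.filter_insert]
    have hnotmem : n ∉ Finset.range n := by simp
    cases hl : l[n]? with
    | none =>
      have hg : l.getD n .leaf = .leaf := by rw [List.getD_eq_getElem?_getD, hl]; rfl
      rw [hg, if_neg (by simp [isLeaf])]
      simp
    | some t =>
      have hg : l.getD n .leaf = t := by rw [List.getD_eq_getElem?_getD, hl]; rfl
      rw [hg]
      cases ht : isLeaf t with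
      | true =>
        rw [if_neg (by simp)]
        simp [ht]
      | false =>
        rw [if_pos rfl, Finset.card_insert_of_notMem (by simp)]
        simp [ht]

theorem lb_eq {T : PreTerm σ} {i : ℕ} {a : List ℕ} (h : nodeAddr T i = some a) (hne : a ≠ [])
    {s' : σ.carrier} {l' : List (PreTerm σ)} (h2 : subAt T a.dropLast = some (.node s' l')) :
    lb T i = ((l'.take (a.getLast?.getD 0 + 1)).filter (fun t => !isLeaf t)).length := by
  cases a with
  | nil => exact absurd rfl hne
  | cons x xs =>
    unfold lb
    rw [h]
    show (match subAt T ((x :: xs).dropLast) with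
      | some (.node _ l) =>
          ((l.take ((x :: xs).getLast?.getD 0 + 1)).filter (fun t => !isLeaf t)).length
      | _ => 0) = _
    rw [h2]

theorem getElem?_indexOf' {q : List ℕ} {S : List (List ℕ)} (h : q ∈ S) :
    S[S.idxOf q]? = some q := by
  rw [List.getElem?_eq_getElem (indexOf_lt_length' h), getElem_indexOf' h]

theorem indexOf_inj' {S : List (List ℕ)} {q1 q2 : List ℕ} (h1 : q1 ∈ S) (h2 : q2 ∈ S)
    (h : S.idxOf q1 = S.idxOf q2) : q1 = q2 := by
  have e1 := getElem?_indexOf' h1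
  rw [h, getElem?_indexOf' h2] at e1
  injection e1 with e1
  exact e1.symm

theorem isLeaf_false_node {t : PreTerm σ} (h : isLeaf t = false) :
    ∃ s l, t = PreTerm.node s l := by
  cases t with
  | leaf => simp [isLeaf] at h
  | node s l => exact ⟨s, l, rfl⟩

theorem lb_card {T : PreTerm σ} {i : ℕ} (h2 : 2 ≤ i) (hd : i ≤ deg T) :
    lb T i = ((Finset.Icc 2 i).filter (fun j => paOf T j = paOf T i)).card := by
  classical
  obtain ⟨hlt, hi⟩ := nodeAddr_some hd (by omega)
  have hne : (nodeAddrs T)[i-1] ≠ [] := addr_ne_nil h2 hlt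
  have hmem : (nodeAddrs T)[i-1] ∈ nodeAddrs T := List.getElem_mem _
  have hrm : ((nodeAddrs T)[i-1]).dropLast ∈ nodeAddrs T := nodeAddrs_parent hmem hne
  obtain ⟨s', l', hsub⟩ := mem_nodeAddrs_iff.1 hrm
  rw [lb_eq hi hne hsub, length_filter_take]
  -- abbreviations
  have hnodup := nodup_nodeAddrs T
  have hidxa : (nodeAddrs T).idxOf ((nodeAddrs T)[i-1]) = i - 1 :=
    indexOf_getElem' hnodup (i-1) hlt
  have hrc : ((nodeAddrs T)[i-1]).dropLast ++ [((nodeAddrs T)[i-1]).getLast?.getD 0]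
      = (nodeAddrs T)[i-1] := dropLast_append_getLastD hne
  have hpai : paOf T i = (nodeAddrs T).idxOf ((nodeAddrs T)[i-1]).dropLast + 1 :=
    paOf_eq hi hne
  -- the two finsets
  set c := ((nodeAddrs T)[i-1]).getLast?.getD 0 with hc
  set r := ((nodeAddrs T)[i-1]).dropLast with hr
  -- forward data for members of the Icc filter
  have key : ∀ j, j ∈ (Finset.Icc 2 i).filter (fun j => paOf T j = paOf T i) →
      ∃ (m : ℕ) (hj : nodeAddr T j = some (r ++ [m])),
        m ≤ c ∧ m < l'.length ∧ isLeaf (l'.getD m .leaf) = false ∧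
        (nodeAddrs T).idxOf (r ++ [m]) = j - 1 := by
    intro j hj
    rw [Finset.mem_filter, Finset.mem_Icc] at hj
    obtain ⟨⟨hj2, hji⟩, hQ⟩ := hj
    obtain ⟨hltj, hjq⟩ := nodeAddr_some (le_trans hji hd) (by omega)
    have hneq : (nodeAddrs T)[j-1] ≠ [] := addr_ne_nil hj2 hltj
    have hqmem : (nodeAddrs T)[j-1] ∈ nodeAddrs T := List.getElem_mem _
    have hqd : ((nodeAddrs T)[j-1]).dropLast ∈ nodeAddrs T := nodeAddrs_parent hqmem hneq
    rw [paOf_eq hjq hneq, hpai] at hQ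
    have hdrop : ((nodeAddrs T)[j-1]).dropLast = r := by
      refine indexOf_inj' hqd hrm ?_
      omega
    set m := ((nodeAddrs T)[j-1]).getLast?.getD 0 with hm
    have hqrc : r ++ [m] = (nodeAddrs T)[j-1] := by
      rw [← hdrop]
      exact dropLast_append_getLastD hneq
    have hidxq : (nodeAddrs T).idxOf (r ++ [m]) = j - 1 := by
      rw [hqrc]
      exact indexOf_getElem' hnodup (j-1) hltj
    have hmc : m ≤ c := by
      rcases Nat.lt_or_ge (j-1) (i-1) with h' | h'
      · have hlex := sorted_lt hltj hlt h'
        rw [← hqrc, ← hrc] at hlex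
        have := lex_append_single.1 hlex
        omega
      · have : j - 1 = i - 1 := by omega
        have : (nodeAddrs T)[j-1] = (nodeAddrs T)[i-1] := by congr 1
        rw [← hqrc, ← hrc] at this
        have := List.append_inj_right this rfl
        injection this with h''
        omega
    obtain ⟨sq, lq, hsq⟩ := mem_nodeAddrs_iff.1 hqmem
    rw [← hqrc, subAt_append, hsub] at hsq
    rw [show (some (PreTerm.node s' l')).bind (fun t => subAt t [m])
        = subAt (PreTerm.node s' l') [m] from rfl, subAt_singleton] at hsq
    have hmlt : m < l'.length := by
      by_contra hcc
      rw [List.getElem?_eq_none (by omega)] at hsq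
      simp at hsq
    have hgd : l'.getD m .leaf = PreTerm.node sq lq := by
      rw [List.getD_eq_getElem?_getD, hsq]
      rfl
    refine ⟨m, by rw [hqrc]; exact hjq, hmc, hmlt, by rw [hgd]; rfl, hidxq⟩
  -- backward data for members of the range filter
  have key2 : ∀ m, m ∈ (Finset.range (c+1)).filter
      (fun m => isLeaf (l'.getD m .leaf) = false) →
      (r ++ [m]) ∈ nodeAddrs T ∧ 2 ≤ (nodeAddrs T).idxOf (r ++ [m]) + 1 ∧
        (nodeAddrs T).idxOf (r ++ [m]) + 1 ≤ i ∧
        paOf T ((nodeAddrs T).idxOf (r ++ [m]) + 1) = paOf T i := by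
    intro m hm
    rw [Finset.mem_filter, Finset.mem_range] at hm
    obtain ⟨hmc, hP⟩ := hm
    have hmlt : m < l'.length := by
      by_contra hcc
      rw [List.getD_eq_getElem?_getD, List.getElem?_eq_none (by omega)] at hP
      simp [isLeaf] at hP
    have hgd : l'.getD m .leaf = l'[m] := by
      rw [List.getD_eq_getElem?_getD, List.getElem?_eq_getElem hmlt]
      rfl
    rw [hgd] at hP
    obtain ⟨sm, lm, hsm⟩ := isLeaf_false_node hP
    have hsubq : subAt T (r ++ [m]) = some (PreTerm.node sm lm) := by
      rw [subAt_append, hsub]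
      rw [show (some (PreTerm.node s' l')).bind (fun t => subAt t [m])
          = subAt (PreTerm.node s' l') [m] from rfl, subAt_singleton]
      rw [List.getElem?_eq_getElem hmlt, hsm]
    have hqmem : (r ++ [m]) ∈ nodeAddrs T := mem_nodeAddrs_iff.2 ⟨sm, lm, hsubq⟩
    have hj2 : 1 ≤ (nodeAddrs T).idxOf (r ++ [m]) := by
      by_contra hcc
      have h0 : (nodeAddrs T).idxOf (r ++ [m]) = 0 := by omega
      have hg0 := getElem?_indexOf' hqmem
      rw [h0] at hg0
      have h0lt : 0 < (nodeAddrs T).length := lt_of_le_of_lt (Nat.zero_le _) (indexOf_lt_length' hqmem)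
      rw [List.getElem?_eq_getElem h0lt, nodeAddrs_getElem_zero T h0lt] at hg0
      simp at hg0
    have hji : (nodeAddrs T).idxOf (r ++ [m]) + 1 ≤ i := by
      rcases Nat.lt_or_ge m c with h' | h'
      · have hlex : List.Lex (· < ·) (r ++ [m]) ((nodeAddrs T)[i-1]) := by
          rw [← hrc]
          exact lex_append_single.2 h'
        have := pos_lt_of_lex (indexOf_lt_length' hqmem) hlt (by
          rw [getElem_indexOf' hqmem]; exact hlex)
        omega
      · have hmec : m = c := by omega
        have : r ++ [m] = (nodeAddrs T)[i-1] := by rw [hmec, hrc]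
        rw [this, hidxa]
        omega
    have hpaj : paOf T ((nodeAddrs T).idxOf (r ++ [m]) + 1) = paOf T i := by
      rw [paOf_eq (nodeAddr_of_indexOf hqmem) (by simp), hpai]
      rw [List.dropLast_concat]
    exact ⟨hqmem, by omega, hji, hpaj⟩
  refine (Finset.card_bij'
    (fun j _ => (((nodeAddr T j).getD []).getLast?).getD 0)
    (fun m _ => (nodeAddrs T).idxOf (r ++ [m]) + 1) ?_ ?_ ?_ ?_).symm
  · -- maps into range filter
    intro j hj
    obtain ⟨m, hjq, hmc, hmlt, hP, _⟩ := key j hj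
    rw [Finset.mem_filter, Finset.mem_range]
    simp only [hjq, Option.getD_some, List.getLast?_concat]
    exact ⟨by omega, hP⟩
  · -- maps into Icc filter
    intro m hm
    obtain ⟨_, hj2, hji, hpaj⟩ := key2 m hm
    rw [Finset.mem_filter, Finset.mem_Icc]
    exact ⟨⟨hj2, hji⟩, hpaj⟩
  · -- left inverse
    intro j hj
    obtain ⟨m, hjq, _, _, _, hidxq⟩ := key j hj
    simp only [hjq, Option.getD_some, List.getLast?_concat, hidxq]
    rw [Finset.mem_filter, Finset.mem_Icc] at hj
    omega
  · -- right inverse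
    intro m hm
    obtain ⟨hqmem, _, _, _⟩ := key2 m hm
    simp only [nodeAddr_of_indexOf hqmem, Option.getD_some, List.getLast?_concat]

end EW

/-- if `T₁ ≤ T₂` in the easterly wind order and `i` is an internal
node of both with the same parent, then `lb T₂ i ≤ lb T₁ i`. -/
theorem stmt7 (σ : Signature) (T₁ T₂ : EW.PreTerm σ) (h₁ : EW.WF T₁) (h₂ : EW.WF T₂)
    (hle : EW.ewLE T₁ T₂) (i : ℕ) (hi1 : 1 ≤ i)
    (hi2 : i ≤ EW.deg T₁) (hi2' : i ≤ EW.deg T₂)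
    (hpa : EW.paOf T₁ i = EW.paOf T₂ i) :
    EW.lb T₂ i ≤ EW.lb T₁ i := by
  rcases Nat.lt_or_ge i 2 with hi' | hi'
  · have hi1' : i = 1 := by omega
    subst hi1'
    have h0 : 0 < (EW.nodeAddrs T₂).length := by rw [← EW.deg_eq_length]; omega
    rw [EW.lb_one h0]
    exact Nat.zero_le _
  · rw [EW.lb_card hi' hi2', EW.lb_card hi' hi2]
    refine Finset.card_le_card ?_
    intro j hj
    rw [Finset.mem_filter, Finset.mem_Icc] at hj ⊢
    obtain ⟨⟨hj2, hji⟩, hQ⟩ := hj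
    refine ⟨⟨hj2, hji⟩, ?_⟩
    have hd2 : EW.paOf T₂ j < j := EW.paOf_lt_self hj2 (le_trans hji hi2')
    have hA1 : (EW.paOf T₁ j : ℚ) ≤ EW.cnc T₁ j :=
      EW.paOf_le_cnc h₁ (by omega) (le_trans hji hi2)
    have hle' := hle.2 j (by omega) (le_trans hji hi2)
    have hA2 : EW.cnc T₂ j < (EW.paOf T₂ j : ℚ) + 1 := EW.cnc_lt_paOf_add_one T₂ j
    have hpa1 : EW.paOf T₁ j ≤ EW.paOf T₂ j := by
      have hq : (EW.paOf T₁ j : ℚ) < (EW.paOf T₂ j : ℚ) + 1 :=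
        lt_of_le_of_lt (le_trans hA1 hle') hA2
      have : (EW.paOf T₁ j : ℚ) < ((EW.paOf T₂ j + 1 : ℕ) : ℚ) := by push_cast; linarith
      exact Nat.lt_succ_iff.1 (by exact_mod_cast this)
    rw [hQ, ← hpa] at hd2
    have hge : EW.paOf T₁ i ≤ EW.paOf T₁ j := EW.paOf_ge hi' hi2 hd2 hji
    rw [hQ, ← hpa] at hpa1
    omega
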